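/- arXiv:2404.13668 — 3 statements merged into one kernel-verified Lean document; each statement's English description precedes it below -/
import Mathlib

section
/- Let p ∈ (1,∞) and let E be a p-resistance form on a finite set V with #V ≥ 3 (or more generally any p-resistance form on a set X). Then R_E(·,·)^{1/(p−1)} satisfies the triangle inequality; i.e., for any three distinct points x, y, z: R_E(x,z)^{1/(p−1)} ≤ R_E(x,y)^{1/(p−1)} + R_E(y,z)^{1/(p−1)}. -/
section aux

lemma rpow_cancel_le' {p : ℝ} (hp : 0 < p) {a b : ℝ} (ha : 0 ≤ a) (hb : 0 ≤ b)
    (h : a ^ (1 / p) ≤ b ^ (1 / p)) : a ≤ b := by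
  have h2 := Real.rpow_le_rpow (Real.rpow_nonneg ha _) h hp.le
  rwa [← Real.rpow_mul ha, ← Real.rpow_mul hb, one_div_mul_cancel hp.ne',
    Real.rpow_one, Real.rpow_one] at h2

lemma add_rpow_le' {p : ℝ} (a b : ℝ) (ha : 0 ≤ a) (hb : 0 ≤ b) (hp : 1 ≤ p) :
    a ^ p + b ^ p ≤ (a + b) ^ p := by
  have h := NNReal.add_rpow_le_rpow_add a.toNNReal b.toNNReal hp
  have := NNReal.coe_le_coe.2 h
  push_cast [NNReal.coe_rpow, Real.coe_toNNReal a ha, Real.coe_toNNReal b hb] at this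
  simpa using this

lemma split_abs (a b t : ℝ) :
    |min a t - min b t| + |max (a - t) 0 - max (b - t) 0| ≤ |a - b| := by
  have ea : ∀ c : ℝ, min c t + max (c - t) 0 = c := by
    intro c
    rcases le_total c t with h | h
    · rw [min_eq_left h, max_eq_right (by linarith)]; ring
    · rw [min_eq_right h, max_eq_left (by linarith)]; ring
  rcases le_total b a with hab | hab
  · have h1 : min b t ≤ min a t := min_le_min hab le_rfl
    have h2 : max (b - t) 0 ≤ max (a - t) 0 := max_le_max (by linarith) le_rfl
    rw [abs_of_nonneg (by linarith), abs_of_nonneg (by linarith),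
      abs_of_nonneg (by linarith)]
    have := ea a; have := ea b; linarith
  · have h1 : min a t ≤ min b t := min_le_min hab le_rfl
    have h2 : max (a - t) 0 ≤ max (b - t) 0 := max_le_max (by linarith) le_rfl
    rw [abs_of_nonpos (by linarith), abs_of_nonpos (by linarith),
      abs_of_nonpos (by linarith)]
    have := ea a; have := ea b; linarith

end aux


lemma holder_two {p A B t : ℝ} (hp : 1 < p) (hA : 0 < A) (hB : 0 < B)
    (ht0 : 0 ≤ t) (ht1 : t ≤ 1) :
    (A ^ (1/(p-1)) + B ^ (1/(p-1))) ^ (1 - p) ≤ (1 - t) ^ p / A + t ^ p / B := by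
  have hpm : (0:ℝ) < p - 1 := by linarith
  set α := A ^ (1/(p-1)) with hα
  set β := B ^ (1/(p-1)) with hβ
  have hα0 : 0 < α := Real.rpow_pos_of_pos hA _
  have hβ0 : 0 < β := Real.rpow_pos_of_pos hB _
  set s := α + β with hs
  have hs0 : 0 < s := by positivity
  have hαA : α ^ (p - 1) = A := by
    rw [hα, ← Real.rpow_mul hA.le, one_div_mul_cancel hpm.ne', Real.rpow_one]
  have hβB : β ^ (p - 1) = B := by
    rw [hβ, ← Real.rpow_mul hB.le, one_div_mul_cancel hpm.ne', Real.rpow_one]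
  have hαp : α ^ p = A * α := by
    have h1 : α ^ p = α ^ ((p-1) + 1) := by norm_num
    rw [h1, Real.rpow_add hα0, Real.rpow_one, hαA]
  have hβp : β ^ p = B * β := by
    have h1 : β ^ p = β ^ ((p-1) + 1) := by norm_num
    rw [h1, Real.rpow_add hβ0, Real.rpow_one, hβB]
  have hsp : s ^ p = s ^ (p-1) * s := by
    have h1 : s ^ p = s ^ ((p-1) + 1) := by norm_num
    rw [h1, Real.rpow_add hs0, Real.rpow_one]
  have hS0 : 0 < s ^ (p - 1) := Real.rpow_pos_of_pos hs0 _
  -- Hölder / Jensen via weighted power mean inequality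
  have key := Real.rpow_arith_mean_le_arith_mean_rpow (Finset.univ : Finset (Fin 2))
    ![α/s, β/s] ![(1-t)*s/α, t*s/β]
    (by intro i _; fin_cases i <;> simp <;> positivity)
    (by simp [Fin.sum_univ_two]; field_simp; exact hs.symm)
    (by intro i _
        fin_cases i
        · simpa using div_nonneg (mul_nonneg (by linarith : (0:ℝ) ≤ 1 - t) hs0.le) hα0.le
        · simpa using div_nonneg (mul_nonneg ht0 hs0.le) hβ0.le)
    hp.le
  simp only [Fin.sum_univ_two, Matrix.cons_val_zero, Matrix.cons_val_one,
    Matrix.head_cons] at key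
  have hLHS : α/s * ((1-t)*s/α) + β/s * (t*s/β) = 1 := by field_simp; ring
  rw [hLHS, Real.one_rpow] at key
  have hRHS : α/s * ((1-t)*s/α) ^ p + β/s * (t*s/β) ^ p
      = s ^ (p-1) * ((1 - t) ^ p / A + t ^ p / B) := by
    rw [Real.div_rpow (mul_nonneg (by linarith : (0:ℝ) ≤ 1 - t) hs0.le) hα0.le,
      Real.div_rpow (mul_nonneg ht0 hs0.le) hβ0.le,
      Real.mul_rpow (by linarith : (0:ℝ) ≤ 1 - t) hs0.le,
      Real.mul_rpow ht0 hs0.le, hsp, hαp, hβp]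
    field_simp
  rw [hRHS] at key
  have hgoal : s ^ (1 - p) = 1 / s ^ (p - 1) := by
    rw [show (1 - p : ℝ) = -(p-1) by ring, Real.rpow_neg hs0.le, one_div]
  rw [hgoal, div_le_iff₀ hS0]
  nlinarith [key]


noncomputable def resR {V : Type*} (p : ℝ) (E : (V → ℝ) → ℝ) (x y : V) : ℝ :=
  sSup {t : ℝ | ∃ u : V → ℝ, 0 < E u ∧ t = |u x - u y| ^ p / E u}


section main
variable {V : Type*} [Fintype V] {p : ℝ} (hp : 1 < p) (E : (V → ℝ) → ℝ)
  (hE0 : ∀ u, 0 ≤ E u)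
  (hhom : ∀ (a : ℝ) (u : V → ℝ), E (a • u) = |a| ^ p * E u)
  (htri : ∀ u v : V → ℝ, E (u + v) ^ (1 / p) ≤ E u ^ (1 / p) + E v ^ (1 / p))
  (hnull : ∀ u : V → ℝ, E u = 0 ↔ ∃ c : ℝ, u = fun _ => c)

include hp hE0 htri hnull in
lemma Etrans (u : V → ℝ) (c : ℝ) : E (fun w => u w + c) = E u := by
  have hp0 : (0:ℝ) < p := lt_trans one_pos hp
  have hc : ∀ d : ℝ, E (fun _ : V => d) = 0 := fun d => (hnull _).2 ⟨d, rfl⟩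
  have key : ∀ (v : V → ℝ) (d : ℝ), E (fun w => v w + d) ≤ E v := by
    intro v d
    have h := htri v (fun _ => d)
    rw [hc d, Real.zero_rpow (by positivity : (1:ℝ)/p ≠ 0), add_zero] at h
    exact rpow_cancel_le' hp0 (hE0 _) (hE0 _) h
  have h1 : E (fun w => u w + c) ≤ E u := key u c
  have h2 : E u ≤ E (fun w => u w + c) := by
    have := key (fun w => u w + c) (-c)
    simpa using this
  linarith

include hp hE0 hhom htri hnull in
/-- there is a positive `c` with `|u x - u y| ≤ c * E u ^ (1/p)` for all `u`. -/
lemma abs_le_cN (x y : V) (hxy : x ≠ y) :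
    ∃ c : ℝ, 0 < c ∧ ∀ u : V → ℝ, |u x - u y| ≤ c * E u ^ (1 / p) := by
  classical
  have hp0 : (0:ℝ) < p := lt_trans one_pos hp
  set N : (V → ℝ) → ℝ := fun u => E u ^ (1 / p) with hN
  have hNnonneg : ∀ u, 0 ≤ N u := fun u => Real.rpow_nonneg (hE0 u) _
  have hNsmul : ∀ (a : ℝ) (u : V → ℝ), N (a • u) = |a| * N u := by
    intro a u
    simp only [hN, hhom a u]
    rw [Real.mul_rpow (by positivity) (hE0 u), ← Real.rpow_mul (abs_nonneg a),
      mul_one_div_cancel hp0.ne', Real.rpow_one]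
  have hN0 : N 0 = 0 := by
    have : E 0 = 0 := (hnull 0).2 ⟨0, rfl⟩
    simp only [hN, this, Real.zero_rpow (by positivity : (1:ℝ)/p ≠ 0)]
  have hNadd : ∀ u v : V → ℝ, N (u + v) ≤ N u + N v := htri
  have hNneg : ∀ u : V → ℝ, N (-u) = N u := by
    intro u
    have := hNsmul (-1) u
    simpa using this
  -- N is Lipschitz
  set C : ℝ := ∑ i : V, N (Pi.single i 1) with hC
  have hC0 : 0 ≤ C := Finset.sum_nonneg (fun i _ => hNnonneg _)
  have hNle : ∀ w : V → ℝ, N w ≤ C * ‖w‖ := by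
    intro w
    have h1 : N w = N (∑ i : V, Pi.single i (w i)) := by rw [Finset.univ_sum_single]
    have h2 : N (∑ i : V, Pi.single i (w i)) ≤ ∑ i : V, N (Pi.single i (w i)) :=
      Finset.le_sum_of_subadditive N hN0.le hNadd _ _
    have h3 : ∀ i : V, N (Pi.single i (w i)) = |w i| * N (Pi.single i 1) := by
      intro i
      have : Pi.single i (w i) = (w i) • (Pi.single i (1:ℝ) : V → ℝ) := by
        funext j
        simp [Pi.single_apply, Pi.smul_apply, mul_ite]
      rw [this, hNsmul]
    calc N w ≤ ∑ i : V, N (Pi.single i (w i)) := h1 ▸ h2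
      _ = ∑ i : V, |w i| * N (Pi.single i 1) := by simp_rw [h3]
      _ ≤ ∑ i : V, ‖w‖ * N (Pi.single i 1) := by
          refine Finset.sum_le_sum (fun i _ => ?_)
          exact mul_le_mul_of_nonneg_right
            (by simpa [Real.norm_eq_abs] using norm_le_pi_norm w i) (hNnonneg _)
      _ = C * ‖w‖ := by rw [← Finset.mul_sum, mul_comm]
  have hNcont : Continuous N := by
    have hlip : LipschitzWith (Real.toNNReal C) N := by
      refine LipschitzWith.of_dist_le_mul (fun u v => ?_)
      rw [Real.dist_eq, dist_eq_norm]
      have hdiff : |N u - N v| ≤ N (u - v) := by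
        rw [abs_sub_le_iff]
        constructor
        · have : N u ≤ N v + N (u - v) := by
            have := hNadd v (u - v); rwa [add_sub_cancel] at this
          linarith
        · have : N v ≤ N u + N (v - u) := by
            have := hNadd u (v - u); rwa [add_sub_cancel] at this
          have h4 : N (v - u) = N (u - v) := by rw [← hNneg (u - v), neg_sub]
          linarith
      calc |N u - N v| ≤ N (u - v) := hdiff
        _ ≤ C * ‖u - v‖ := hNle _
        _ ≤ (Real.toNNReal C : ℝ) * ‖u - v‖ := by
            exact mul_le_mul_of_nonneg_right (Real.le_coe_toNNReal C) (norm_nonneg _)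
    exact hlip.continuous
  -- compactness
  set K : Set (V → ℝ) := {u | ‖u‖ = 1 ∧ u y = 0} with hK
  have hKclosed : IsClosed K := by
    have : K = (fun u : V → ℝ => ‖u‖) ⁻¹' {1} ∩ (fun u : V → ℝ => u y) ⁻¹' {0} := by
      ext u; simp [hK]
    rw [this]
    exact ((isClosed_singleton.preimage continuous_norm).inter
      (isClosed_singleton.preimage (continuous_apply y)))
  have hKcompact : IsCompact K := by
    refine (isCompact_closedBall (0 : V → ℝ) 1).of_isClosed_subset hKclosed ?_
    intro u hu
    simpa [Metric.mem_closedBall, dist_eq_norm] using le_of_eq hu.1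
  have hKne : K.Nonempty := by
    refine ⟨Pi.single x 1, ?_, ?_⟩
    · simp [Pi.norm_single]
    · simp [Pi.single_eq_of_ne hxy.symm]
  obtain ⟨u₀, hu₀K, hmin'⟩ := hKcompact.exists_isMinOn hKne hNcont.continuousOn
  have hmin : ∀ v ∈ K, N u₀ ≤ N v := fun v hv => hmin' hv
  have hc0 : 0 < N u₀ := by
    rcases (hNnonneg u₀).lt_or_eq with h | h
    · exact h
    · exfalso
      have hE : E u₀ = 0 := by
        have : (E u₀) ^ (1/p) = 0 := h.symm
        have h2 := Real.rpow_le_rpow (hE0 u₀) (le_of_eq rfl) hp0.le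
        nlinarith [rpow_cancel_le' hp0 (hE0 u₀) le_rfl (by rw [this,
          Real.zero_rpow (by positivity : (1:ℝ)/p ≠ 0)] : E u₀ ^ (1/p) ≤ (0:ℝ) ^ (1/p)),
          hE0 u₀]
      obtain ⟨k, hk⟩ := (hnull u₀).1 hE
      have h1 : u₀ y = k := by rw [hk]
      have h2 : k = 0 := by rw [← h1, hu₀K.2]
      have hz : u₀ = 0 := by funext w; rw [hk, h2]; rfl
      have : ‖u₀‖ = 0 := by rw [hz, norm_zero]
      rw [hu₀K.1] at this; norm_num at this
  refine ⟨(N u₀)⁻¹, inv_pos.2 hc0, fun u => ?_⟩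
  set v : V → ℝ := fun w => u w - u y with hv
  have hEv : E v = E u := by
    have := Etrans hp E hE0 htri hnull u (-(u y))
    simpa [hv, sub_eq_add_neg] using this
  have hvy : v y = 0 := by simp [hv]
  have habs : |u x - u y| ≤ ‖v‖ := by
    have : u x - u y = v x := by simp [hv]
    rw [this]
    simpa [Real.norm_eq_abs] using norm_le_pi_norm v x
  rcases eq_or_ne v 0 with h0 | h0
  · have : u x - u y = 0 := by
      have := habs; rw [h0] at this; simp at this
      linarith [abs_nonneg (u x - u y), this]
    rw [this]
    simp only [abs_zero]
    exact mul_nonneg (inv_pos.2 hc0).le (Real.rpow_nonneg (hE0 u) _)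
  · have hnv : 0 < ‖v‖ := norm_pos_iff.2 h0
    have hmem : ‖v‖⁻¹ • v ∈ K := by
      constructor
      · rw [norm_smul]
        simp [abs_of_pos (inv_pos.2 hnv), inv_mul_cancel₀ hnv.ne']
      · show ‖v‖⁻¹ * v y = 0
        rw [hvy, mul_zero]
    have h1 : N u₀ ≤ N (‖v‖⁻¹ • v) := hmin _ hmem
    rw [hNsmul, abs_of_pos (inv_pos.2 hnv)] at h1
    have h2 : ‖v‖ * N u₀ ≤ N v := by
      rw [mul_comm]
      calc N u₀ * ‖v‖ ≤ (‖v‖⁻¹ * N v) * ‖v‖ := by nlinarith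
        _ = N v := by field_simp
    have h3 : N v = E u ^ (1/p) := by show E v ^ (1/p) = E u ^ (1/p); rw [hEv]
    calc |u x - u y| ≤ ‖v‖ := habs
      _ ≤ (N u₀)⁻¹ * N v := by
          rw [← h3] at *
          rw [le_inv_mul_iff₀ hc0]
          nlinarith
      _ = (N u₀)⁻¹ * E u ^ (1/p) := by rw [h3]

include hp hE0 hhom htri hnull in
lemma bddAbove_res (x y : V) (hxy : x ≠ y) :
    BddAbove {t : ℝ | ∃ u : V → ℝ, 0 < E u ∧ t = |u x - u y| ^ p / E u} := by
  have hp0 : (0:ℝ) < p := lt_trans one_pos hp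
  obtain ⟨c, hc, hle⟩ := abs_le_cN hp E hE0 hhom htri hnull x y hxy
  refine ⟨c ^ p, fun t ht => ?_⟩
  obtain ⟨u, hEu, rfl⟩ := ht
  have h1 : |u x - u y| ^ p ≤ (c * E u ^ (1/p)) ^ p :=
    Real.rpow_le_rpow (abs_nonneg _) (hle u) hp0.le
  have h2 : (c * E u ^ (1/p)) ^ p = c ^ p * E u := by
    rw [Real.mul_rpow hc.le (Real.rpow_nonneg (hE0 u) _), ← Real.rpow_mul (hE0 u),
      one_div_mul_cancel hp0.ne', Real.rpow_one]
  rw [div_le_iff₀ hEu]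
  calc |u x - u y| ^ p ≤ c ^ p * E u := h2 ▸ h1
    _ = c ^ p * E u := rfl

include hp hE0 hhom htri hnull in
lemma resR_pos (x y : V) (hxy : x ≠ y) : 0 < resR p E x y := by
  classical
  have hp0 : (0:ℝ) < p := lt_trans one_pos hp
  set u1 : V → ℝ := Pi.single x 1 with hu1
  have hx1 : u1 x = 1 := by simp [hu1]
  have hy0 : u1 y = 0 := by simp [hu1, Pi.single_eq_of_ne hxy.symm]
  have hEu1 : 0 < E u1 := by
    rcases (hE0 u1).lt_or_eq with h | h
    · exact h
    · exfalso
      obtain ⟨k, hk⟩ := (hnull u1).1 h.symm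
      have h1 : (1:ℝ) = k := by rw [← hx1, hk]
      have h2 : (0:ℝ) = k := by rw [← hy0, hk]
      rw [← h2] at h1; norm_num at h1
  have hmem : |u1 x - u1 y| ^ p / E u1 ∈
      {t : ℝ | ∃ u : V → ℝ, 0 < E u ∧ t = |u x - u y| ^ p / E u} := ⟨u1, hEu1, rfl⟩
  have hval : |u1 x - u1 y| ^ p / E u1 = 1 / E u1 := by
    rw [hx1, hy0]; simp [Real.one_rpow]
  have := le_csSup (bddAbove_res hp E hE0 hhom htri hnull x y hxy) hmem
  calc (0:ℝ) < 1 / E u1 := by positivity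
    _ = |u1 x - u1 y| ^ p / E u1 := hval.symm
    _ ≤ resR p E x y := this


end main

/-- For a `p`-resistance form `E` on a finite set `V` with at least three points,
`R_E(·,·)^{1/(p−1)}` satisfies the triangle inequality: for distinct `x, y, z`,
`R_E(x,z)^{1/(p−1)} ≤ R_E(x,y)^{1/(p−1)} + R_E(y,z)^{1/(p−1)}`. -/
theorem stmt_14 {V : Type*} [Fintype V] (p : ℝ) (hp : 1 < p)
    (hcard : 3 ≤ Fintype.card V)
    (E : (V → ℝ) → ℝ)
    (hE0 : ∀ u, 0 ≤ E u)
    (hhom : ∀ (a : ℝ) (u : V → ℝ), E (a • u) = |a| ^ p * E u)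
    (htri : ∀ u v : V → ℝ, E (u + v) ^ (1 / p) ≤ E u ^ (1 / p) + E v ^ (1 / p))
    (hnull : ∀ u : V → ℝ, E u = 0 ↔ ∃ c : ℝ, u = fun _ => c)
    (hGC : ∀ (n₁ n₂ : ℕ) (q₁ q₂ : ℝ), 0 < q₁ → q₁ ≤ p → p ≤ q₂ →
      ∀ T : (Fin n₁ → ℝ) → (Fin n₂ → ℝ), T 0 = 0 →
        (∀ x y : Fin n₁ → ℝ,
          (∑ l : Fin n₂, |T x l - T y l| ^ q₂) ^ (1 / q₂)
            ≤ (∑ k : Fin n₁, |x k - y k| ^ q₁) ^ (1 / q₁)) →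
        ∀ u : Fin n₁ → V → ℝ,
          (∑ l : Fin n₂, E (fun z => T (fun k => u k z) l) ^ (q₂ / p)) ^ (1 / q₂)
            ≤ (∑ k : Fin n₁, E (u k) ^ (q₁ / p)) ^ (1 / q₁))
    (hGCtop : ∀ (n₁ n₂ : ℕ) (q₁ : ℝ), 0 < q₁ → q₁ ≤ p →
      ∀ T : (Fin n₁ → ℝ) → (Fin n₂ → ℝ), T 0 = 0 →
        (∀ (x y : Fin n₁ → ℝ) (l : Fin n₂),
          |T x l - T y l| ≤ (∑ k : Fin n₁, |x k - y k| ^ q₁) ^ (1 / q₁)) →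
        ∀ (u : Fin n₁ → V → ℝ) (l : Fin n₂),
          E (fun z => T (fun k => u k z) l) ^ (1 / p)
            ≤ (∑ k : Fin n₁, E (u k) ^ (q₁ / p)) ^ (1 / q₁)) :
    ∀ x y z : V, x ≠ y → y ≠ z → x ≠ z →
      (resR p E x z) ^ (1 / (p - 1))
        ≤ (resR p E x y) ^ (1 / (p - 1)) + (resR p E y z) ^ (1 / (p - 1)) := by
  intro x y z hxy hyz hxz
  have hp0 : (0:ℝ) < p := lt_trans one_pos hp
  have hpm : (0:ℝ) < p - 1 := by linarith
  have hApos : 0 < (resR p E x y) := resR_pos hp E hE0 hhom htri hnull x y hxy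
  have hBpos : 0 < (resR p E y z) := resR_pos hp E hE0 hhom htri hnull y z hyz
  have bddA := bddAbove_res hp E hE0 hhom htri hnull x y hxy
  have bddB := bddAbove_res hp E hE0 hhom htri hnull y z hyz
  have hα0 : 0 < (resR p E x y) ^ (1/(p-1)) := Real.rpow_pos_of_pos hApos _
  have hβ0 : 0 < (resR p E y z) ^ (1/(p-1)) := Real.rpow_pos_of_pos hBpos _
  have hs0 : 0 < (resR p E x y) ^ (1/(p-1)) + (resR p E y z) ^ (1/(p-1)) := add_pos hα0 hβ0
  -- key pointwise estimate for normalized functions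
  have key : ∀ u : V → ℝ, u x = 1 → u z = 0 →
      ((resR p E x y) ^ (1/(p-1)) + (resR p E y z) ^ (1/(p-1))) ^ (1 - p) ≤ E u := by
    intro u hux huz
    -- Step 1 : clamping decreases energy
    have hcl : E (fun w => min (max (u w) 0) 1) ≤ E u := by
      have hT := hGC 1 1 p p hp0 le_rfl le_rfl (fun v _ => min (max (v 0) 0) 1)
        (by funext l; simp)
        (by
          intro a b
          simp only [Fin.sum_univ_one]
          refine Real.rpow_le_rpow (Real.rpow_nonneg (abs_nonneg _) _)
            (Real.rpow_le_rpow (abs_nonneg _) ?_ hp0.le) (by positivity)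
          have h1 : |min (max (a 0) 0) 1 - min (max (b 0) 0) 1|
              ≤ |max (a 0) 0 - max (b 0) 0| := by
            simpa using abs_min_sub_min_le_max (max (a 0) 0) 1 (max (b 0) 0) 1
          have h2 : |max (a 0) 0 - max (b 0) 0| ≤ |a 0 - b 0| := by
            simpa using abs_max_sub_max_le_max (a 0) 0 (b 0) 0
          exact le_trans h1 h2)
        (fun _ => u)
      simp only [Fin.sum_univ_one, div_self hp0.ne', Real.rpow_one] at hT
      exact rpow_cancel_le' hp0 (hE0 _) (hE0 _) hT
    set t : ℝ := min (max (u y) 0) 1 with htdef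
    have ht0 : 0 ≤ t := le_min (le_max_right _ _) zero_le_one
    have ht1 : t ≤ 1 := min_le_right _ _
    -- Step 2 : splitting superadditivity
    have hsplit : E (fun w => min (min (max (u w) 0) 1) t)
        + E (fun w => max (min (max (u w) 0) 1 - t) 0)
        ≤ E (fun w => min (max (u w) 0) 1) := by
      have hT := hGC 1 2 p p hp0 le_rfl le_rfl
        (fun v => ![min (v 0) t, max (v 0 - t) 0])
        (by
          funext l
          fin_cases l <;>
            simp [min_eq_left ht0, max_eq_right (neg_nonpos.2 ht0)])
        (by
          intro a b
          simp only [Fin.sum_univ_two, Fin.sum_univ_one, Matrix.cons_val_zero,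
            Matrix.cons_val_one, Matrix.head_cons]
          refine Real.rpow_le_rpow (by positivity) ?_ (by positivity)
          have h1 : |min (a 0) t - min (b 0) t| ^ p + |max (a 0 - t) 0 - max (b 0 - t) 0| ^ p
              ≤ (|min (a 0) t - min (b 0) t| + |max (a 0 - t) 0 - max (b 0 - t) 0|) ^ p :=
            add_rpow_le' _ _ (abs_nonneg _) (abs_nonneg _) hp.le
          refine le_trans h1 (Real.rpow_le_rpow (by positivity) ?_ hp0.le)
          exact split_abs (a 0) (b 0) t)
        (fun _ => (fun w => min (max (u w) 0) 1))
      simp only [Fin.sum_univ_two, Fin.sum_univ_one, Matrix.cons_val_zero,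
        Matrix.cons_val_one, Matrix.head_cons, div_self hp0.ne', Real.rpow_one] at hT
      exact rpow_cancel_le' hp0 (add_nonneg (hE0 _) (hE0 _)) (hE0 _) hT
    -- Step 3 : lower bound for the two pieces
    have hv : t ^ p / (resR p E y z) ≤ E (fun w => min (min (max (u w) 0) 1) t) := by
      rcases ht0.eq_or_lt with h0 | h0
      · rw [← h0, Real.zero_rpow hp0.ne', zero_div]
        exact hE0 _
      · have hvy : (fun w => min (min (max (u w) 0) 1) t) y = t := by
          show min (min (max (u y) 0) 1) t = t
          rw [← htdef, min_self]
        have hvz : (fun w => min (min (max (u w) 0) 1) t) z = 0 := by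
          show min (min (max (u z) 0) 1) t = 0
          rw [huz, max_self, min_eq_left zero_le_one, min_eq_left ht0]
        have hEv : 0 < E (fun w => min (min (max (u w) 0) 1) t) := by
          rcases (hE0 _).lt_or_eq with h | h
          · exact h
          · exfalso
            obtain ⟨k, hk⟩ := (hnull _).1 h.symm
            have e1 : t = k := by rw [← hvy, hk]
            have e2 : (0:ℝ) = k := by rw [← hvz, hk]
            rw [← e2] at e1; exact absurd e1.symm h0.ne
        have hmem : t ^ p / E (fun w => min (min (max (u w) 0) 1) t) ≤ (resR p E y z) := by
          have h5 := le_csSup bddB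
            ⟨(fun w => min (min (max (u w) 0) 1) t), hEv, rfl⟩
          rw [hvy, hvz, sub_zero, abs_of_pos h0] at h5
          exact h5
        rw [div_le_iff₀ hBpos]
        calc t ^ p ≤ (resR p E y z) * E (fun w => min (min (max (u w) 0) 1) t) := by
              rw [div_le_iff₀ hEv] at hmem; linarith [hmem]
          _ = E (fun w => min (min (max (u w) 0) 1) t) * (resR p E y z) := mul_comm _ _
    have hw : (1 - t) ^ p / (resR p E x y) ≤ E (fun w => max (min (max (u w) 0) 1 - t) 0) := by
      rcases eq_or_lt_of_le ht1 with h1 | h1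
      · rw [h1, sub_self, Real.zero_rpow hp0.ne', zero_div]
        exact hE0 _
      · have hwx : (fun w => max (min (max (u w) 0) 1 - t) 0) x = 1 - t := by
          show max (min (max (u x) 0) 1 - t) 0 = 1 - t
          rw [hux, max_eq_left zero_le_one, min_self, max_eq_left (by linarith)]
        have hwy : (fun w => max (min (max (u w) 0) 1 - t) 0) y = 0 := by
          show max (min (max (u y) 0) 1 - t) 0 = 0
          rw [← htdef, sub_self, max_self]
        have hEw : 0 < E (fun w => max (min (max (u w) 0) 1 - t) 0) := by
          rcases (hE0 _).lt_or_eq with h | h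
          · exact h
          · exfalso
            obtain ⟨k, hk⟩ := (hnull _).1 h.symm
            have e1 : 1 - t = k := by rw [← hwx, hk]
            have e2 : (0:ℝ) = k := by rw [← hwy, hk]
            rw [← e2] at e1; linarith
        have hmem : (1 - t) ^ p / E (fun w => max (min (max (u w) 0) 1 - t) 0) ≤ (resR p E x y) := by
          have h5 := le_csSup bddA
            ⟨(fun w => max (min (max (u w) 0) 1 - t) 0), hEw, rfl⟩
          rw [hwx, hwy, sub_zero, abs_of_pos (by linarith : (0:ℝ) < 1 - t)] at h5
          exact h5
        rw [div_le_iff₀ hApos]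
        calc (1 - t) ^ p ≤ (resR p E x y) * E (fun w => max (min (max (u w) 0) 1 - t) 0) := by
              rw [div_le_iff₀ hEw] at hmem; linarith [hmem]
          _ = E (fun w => max (min (max (u w) 0) 1 - t) 0) * (resR p E x y) := mul_comm _ _
    have hhold := holder_two hp hApos hBpos ht0 ht1
    linarith
  -- the supremum estimate
  have hsup : resR p E x z ≤ ((resR p E x y) ^ (1/(p-1)) + (resR p E y z) ^ (1/(p-1))) ^ (p - 1) := by
    rw [resR]
    apply Real.sSup_le
    · rintro r ⟨u, hEu, rfl⟩
      rcases eq_or_ne (u x) (u z) with he | hne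
      · rw [he, sub_self, abs_zero, Real.zero_rpow hp0.ne', zero_div]
        exact (Real.rpow_pos_of_pos hs0 _).le
      · have hd : u x - u z ≠ 0 := sub_ne_zero.2 hne
        have hEnorm : E (fun w => (u w - u z) / (u x - u z))
            = E u / |u x - u z| ^ p := by
          have h1 : (fun w => (u w - u z) / (u x - u z))
              = (u x - u z)⁻¹ • (fun w => u w + -(u z)) := by
            funext w
            simp [div_eq_inv_mul, sub_eq_add_neg]
          rw [h1, hhom, Etrans hp E hE0 htri hnull, abs_inv,
            Real.inv_rpow (abs_nonneg _), inv_mul_eq_div]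
        have hux : (fun w => (u w - u z) / (u x - u z)) x = 1 := by
          show (u x - u z) / (u x - u z) = 1
          rw [div_self hd]
        have huz : (fun w => (u w - u z) / (u x - u z)) z = 0 := by
          show (u z - u z) / (u x - u z) = 0
          rw [sub_self, zero_div]
        have hk := key (fun w => (u w - u z) / (u x - u z)) hux huz
        rw [hEnorm] at hk
        have habs : 0 < |u x - u z| ^ p := Real.rpow_pos_of_pos (abs_pos.2 hd) _
        have hspow : (0:ℝ) < ((resR p E x y) ^ (1/(p-1)) + (resR p E y z) ^ (1/(p-1))) ^ (1 - p) :=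
          Real.rpow_pos_of_pos hs0 _
        have hmul : ((resR p E x y) ^ (1/(p-1)) + (resR p E y z) ^ (1/(p-1))) ^ (1 - p) * |u x - u z| ^ p ≤ E u :=
          (le_div_iff₀ habs).1 hk
        have hinv : ((resR p E x y) ^ (1/(p-1)) + (resR p E y z) ^ (1/(p-1))) ^ (p - 1)
            = (((resR p E x y) ^ (1/(p-1)) + (resR p E y z) ^ (1/(p-1))) ^ (1 - p))⁻¹ := by
          rw [show (1 - p : ℝ) = -(p-1) by ring, Real.rpow_neg hs0.le, inv_inv]
        rw [hinv, div_le_iff₀ hEu]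
        nlinarith [mul_le_mul_of_nonneg_left hmul (inv_nonneg.2 hspow.le),
          inv_mul_cancel₀ hspow.ne']
    · exact (Real.rpow_pos_of_pos hs0 _).le
  -- conclusion
  have hres0 : 0 ≤ resR p E x z := by
    rw [resR]
    apply Real.sSup_nonneg
    rintro r ⟨u, hEu, rfl⟩
    exact div_nonneg (Real.rpow_nonneg (abs_nonneg _) _) (hE0 u)
  calc resR p E x z ^ (1/(p-1))
      ≤ (((resR p E x y) ^ (1/(p-1)) + (resR p E y z) ^ (1/(p-1))) ^ (p - 1)) ^ (1/(p-1)) :=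
        Real.rpow_le_rpow hres0 hsup (by positivity)
    _ = (resR p E x y) ^ (1/(p-1)) + (resR p E y z) ^ (1/(p-1)) := by
        rw [← Real.rpow_mul hs0.le, mul_one_div_cancel hpm.ne', Real.rpow_one]
end

section
/- Let p ∈ (1,∞) and n ∈ ℕ. Define T_a : ℝ² → ℝ for a₁, a₂ > 0 by T(x₁,x₂) = (((−a₁) ∨ (x₁/a₂)) ∧ a₁) · (((−a₂) ∨ (x₂/a₁)) ∧ a₂). Then T satisfies |T(x) − T(y)| ≤ |x₁ − y₁| + |x₂ − y₂| for all x, y ∈ ℝ² and T(0,0) = 0. Consequently, if (E, F) is a p-energy form on a measure space satisfying the generalized p-contraction property, then for f, g ∈ F ∩ L^∞: f·g ∈ F and E(fg)^{1/p} ≤ ‖g‖_∞ E(f)^{1/p} + ‖f‖_∞ E(g)^{1/p} (Leibniz-type inequality). -/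
/-! Each truncation `clamp c t = ((-c) ∨ t) ∧ c` is 1-Lipschitz and bounded by `c`, so the product
`T(x) = clamp a₁ (x₁ / a₂) · clamp a₂ (x₂ / a₁)` is 1-Lipschitz for the `ℓ¹` distance on `ℝ²`.
With `a₁ = M_f`, `a₂ = M_g` the map `T` sends `(M_g f, M_f g)` to `f g`, so the generalized
`p`-contraction property with `(q₁, q₂, n₁, n₂) = (1, p, 2, 1)` gives
`E(fg)^{1/p} ≤ E(M_g f)^{1/p} + E(M_f g)^{1/p}`, and `p`-homogeneity of `E` finishes. -/

noncomputable def clamp (c t : ℝ) : ℝ := min (max (-c) t) c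

lemma abs_clamp_sub_clamp_le (c s t : ℝ) : |clamp c s - clamp c t| ≤ |s - t| := by
  refine (abs_min_sub_min_le_max _ _ _ _).trans (max_le ?_ (by simp))
  simpa only [max_comm (-c)] using abs_max_sub_max_le_abs s t (-c)

lemma abs_clamp_le {c : ℝ} (hc : 0 ≤ c) (t : ℝ) : |clamp c t| ≤ c :=
  abs_le.mpr ⟨le_min (le_max_left _ _) (by linarith), min_le_right _ _⟩

lemma clamp_of_abs_le {c t : ℝ} (ht : |t| ≤ c) : clamp c t = t := by
  obtain ⟨h₁, h₂⟩ := abs_le.mp ht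
  rw [clamp, max_eq_right h₁, min_eq_left h₂]

noncomputable def truncProd (a₁ a₂ x₁ x₂ : ℝ) : ℝ := clamp a₁ (x₁ / a₂) * clamp a₂ (x₂ / a₁)

lemma truncProd_zero_zero {a₁ : ℝ} (ha₁ : 0 ≤ a₁) (a₂ : ℝ) : truncProd a₁ a₂ 0 0 = 0 := by
  rw [truncProd, zero_div, clamp_of_abs_le (by simpa using ha₁), zero_mul]

lemma abs_truncProd_sub_le {a₁ a₂ : ℝ} (ha₁ : 0 < a₁) (ha₂ : 0 < a₂) (x₁ x₂ y₁ y₂ : ℝ) :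
    |truncProd a₁ a₂ x₁ x₂ - truncProd a₁ a₂ y₁ y₂| ≤ |x₁ - y₁| + |x₂ - y₂| := by
  have lip₁ : |clamp a₁ (x₁ / a₂) - clamp a₁ (y₁ / a₂)| ≤ |x₁ - y₁| / a₂ := by
    simpa only [← sub_div, abs_div, abs_of_pos ha₂] using
      abs_clamp_sub_clamp_le a₁ (x₁ / a₂) (y₁ / a₂)
  have lip₂ : |clamp a₂ (x₂ / a₁) - clamp a₂ (y₂ / a₁)| ≤ |x₂ - y₂| / a₁ := by
    simpa only [← sub_div, abs_div, abs_of_pos ha₁] using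
      abs_clamp_sub_clamp_le a₂ (x₂ / a₁) (y₂ / a₁)
  calc |truncProd a₁ a₂ x₁ x₂ - truncProd a₁ a₂ y₁ y₂|
      = |clamp a₁ (x₁ / a₂) * (clamp a₂ (x₂ / a₁) - clamp a₂ (y₂ / a₁))
          + clamp a₂ (y₂ / a₁) * (clamp a₁ (x₁ / a₂) - clamp a₁ (y₁ / a₂))| := by
        rw [truncProd, truncProd]; congr 1; ring
    _ ≤ a₁ * (|x₂ - y₂| / a₁) + a₂ * (|x₁ - y₁| / a₂) := by
        refine (abs_add_le _ _).trans ?_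
        rw [abs_mul, abs_mul]
        gcongr
        exacts [abs_clamp_le ha₁.le _, abs_clamp_le ha₂.le _]
    _ = |x₁ - y₁| + |x₂ - y₂| := by field_simp; ring

lemma truncProd_mul_mul {a₁ a₂ s t : ℝ} (ha₁ : a₁ ≠ 0) (ha₂ : a₂ ≠ 0)
    (hs : |s| ≤ a₁) (ht : |t| ≤ a₂) : truncProd a₁ a₂ (a₂ * s) (a₁ * t) = s * t := by
  rw [truncProd, mul_div_cancel_left₀ s ha₂, mul_div_cancel_left₀ t ha₁,
    clamp_of_abs_le hs, clamp_of_abs_le ht]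

section EnergyForm

variable {X : Type*} {p : ℝ} {F : Submodule ℝ (X → ℝ)} {E : (X → ℝ) → ℝ}

variable (p F E) in
def GeneralizedContraction : Prop :=
  ∀ (n₁ n₂ : ℕ) (q₁ q₂ : ℝ), 0 < q₁ → q₁ ≤ p → p ≤ q₂ →
    ∀ T : (Fin n₁ → ℝ) → (Fin n₂ → ℝ), T 0 = 0 →
      (∀ x y : Fin n₁ → ℝ,
        (∑ l : Fin n₂, |T x l - T y l| ^ q₂) ^ (1 / q₂)
          ≤ (∑ k : Fin n₁, |x k - y k| ^ q₁) ^ (1 / q₁)) →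
      ∀ u : Fin n₁ → X → ℝ, (∀ k, u k ∈ F) →
        (∀ l, (fun z => T (fun k => u k z) l) ∈ F) ∧
        (∑ l : Fin n₂, E (fun z => T (fun k => u k z) l) ^ (q₂ / p)) ^ (1 / q₂)
          ≤ (∑ k : Fin n₁, E (u k) ^ (q₁ / p)) ^ (1 / q₁)

lemma GeneralizedContraction.comp₂ (hGC : GeneralizedContraction p F E) (hp : 1 ≤ p)
    {T : ℝ → ℝ → ℝ} (hT0 : T 0 0 = 0)
    (hT : ∀ x₁ x₂ y₁ y₂, |T x₁ x₂ - T y₁ y₂| ≤ |x₁ - y₁| + |x₂ - y₂|)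
    {u₁ u₂ : X → ℝ} (hu₁ : u₁ ∈ F) (hu₂ : u₂ ∈ F) :
    (fun z => T (u₁ z) (u₂ z)) ∈ F ∧
      E (fun z => T (u₁ z) (u₂ z)) ^ (1 / p) ≤ E u₁ ^ (1 / p) + E u₂ ^ (1 / p) := by
  have hp0 : p ≠ 0 := by positivity
  have hTlip : ∀ x y : Fin 2 → ℝ,
      (∑ _l : Fin 1, |T (x 0) (x 1) - T (y 0) (y 1)| ^ p) ^ (1 / p)
        ≤ (∑ k : Fin 2, |x k - y k| ^ (1 : ℝ)) ^ (1 / (1 : ℝ)) := fun x y => by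
    simpa [← Real.rpow_mul (abs_nonneg _), hp0] using hT (x 0) (x 1) (y 0) (y 1)
  obtain ⟨hmem, hle⟩ := hGC 2 1 1 p one_pos hp le_rfl (fun x _ => T (x 0) (x 1))
    (funext fun _ => hT0) hTlip ![u₁, u₂] (Fin.forall_fin_two.mpr ⟨hu₁, hu₂⟩)
  exact ⟨hmem 0, by simpa [hp0] using hle⟩

variable (hE0 : ∀ u ∈ F, 0 ≤ E u) (hhom : ∀ (a : ℝ), ∀ u ∈ F, E (a • u) = |a| ^ p * E u)
include hhom

lemma energy_zero (hp : p ≠ 0) : E 0 = 0 := by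
  simpa [Real.zero_rpow hp] using hhom 0 0 F.zero_mem

include hE0 in
lemma energy_smul_rpow_inv (hp : p ≠ 0) (a : ℝ) {u : X → ℝ} (hu : u ∈ F) :
    E (a • u) ^ (1 / p) = |a| * E u ^ (1 / p) := by
  rw [hhom a u hu, Real.mul_rpow (by positivity) (hE0 u hu), ← Real.rpow_mul (abs_nonneg a),
    mul_one_div_cancel hp, Real.rpow_one]

include hE0 in
lemma GeneralizedContraction.mul_mem_and_leibniz (hGC : GeneralizedContraction p F E)
    (hp : 1 ≤ p) {f g : X → ℝ} (hf : f ∈ F) (hg : g ∈ F) {Mf Mg : ℝ} (hMf0 : 0 < Mf)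
    (hMg0 : 0 < Mg) (hMf : ∀ z, |f z| ≤ Mf) (hMg : ∀ z, |g z| ≤ Mg) :
    f * g ∈ F ∧ E (f * g) ^ (1 / p) ≤ Mg * E f ^ (1 / p) + Mf * E g ^ (1 / p) := by
  have hp0 : p ≠ 0 := by positivity
  have hprod : (fun z => truncProd Mf Mg ((Mg • f) z) ((Mf • g) z)) = f * g :=
    funext fun z => truncProd_mul_mul hMf0.ne' hMg0.ne' (hMf z) (hMg z)
  obtain ⟨hmem, hle⟩ := hGC.comp₂ hp (truncProd_zero_zero hMf0.le Mg)
    (abs_truncProd_sub_le hMf0 hMg0) (F.smul_mem Mg hf) (F.smul_mem Mf hg)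
  rw [hprod, energy_smul_rpow_inv hE0 hhom hp0 _ hf, energy_smul_rpow_inv hE0 hhom hp0 _ hg,
    abs_of_pos hMf0, abs_of_pos hMg0] at hle
  exact ⟨hprod ▸ hmem, hle⟩

include hE0 in
lemma leibniz_of_mul_eq_zero (hp : p ≠ 0) {f g : X → ℝ} (hf : f ∈ F) (hg : g ∈ F)
    (hfg : f * g = 0) {Mf Mg : ℝ} (hMf0 : 0 ≤ Mf) (hMg0 : 0 ≤ Mg) :
    f * g ∈ F ∧ E (f * g) ^ (1 / p) ≤ Mg * E f ^ (1 / p) + Mf * E g ^ (1 / p) := by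
  refine ⟨hfg ▸ F.zero_mem, ?_⟩
  have := hE0 f hf
  have := hE0 g hg
  rw [hfg, energy_zero hhom hp, Real.zero_rpow (one_div_ne_zero hp)]
  positivity

end EnergyForm

theorem stmt_18_general {X : Type*} (p : ℝ) (hp : 1 < p)
    (F : Submodule ℝ (X → ℝ)) (E : (X → ℝ) → ℝ)
    (hE0 : ∀ u ∈ F, 0 ≤ E u)
    (hhom : ∀ (a : ℝ), ∀ u ∈ F, E (a • u) = |a| ^ p * E u)
    (hGC : ∀ (n₁ n₂ : ℕ) (q₁ q₂ : ℝ), 0 < q₁ → q₁ ≤ p → p ≤ q₂ →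
      ∀ T : (Fin n₁ → ℝ) → (Fin n₂ → ℝ), T 0 = 0 →
        (∀ x y : Fin n₁ → ℝ,
          (∑ l : Fin n₂, |T x l - T y l| ^ q₂) ^ (1 / q₂)
            ≤ (∑ k : Fin n₁, |x k - y k| ^ q₁) ^ (1 / q₁)) →
        ∀ u : Fin n₁ → X → ℝ, (∀ k, u k ∈ F) →
          (∀ l, (fun z => T (fun k => u k z) l) ∈ F) ∧
          (∑ l : Fin n₂, E (fun z => T (fun k => u k z) l) ^ (q₂ / p)) ^ (1 / q₂)
            ≤ (∑ k : Fin n₁, E (u k) ^ (q₁ / p)) ^ (1 / q₁)) :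
    (∀ a₁ a₂ : ℝ, 0 < a₁ → 0 < a₂ →
        (min (max (-a₁) (0 / a₂)) a₁ * min (max (-a₂) (0 / a₁)) a₂ = 0) ∧
        ∀ x₁ x₂ y₁ y₂ : ℝ,
          |min (max (-a₁) (x₁ / a₂)) a₁ * min (max (-a₂) (x₂ / a₁)) a₂
              - min (max (-a₁) (y₁ / a₂)) a₁ * min (max (-a₂) (y₂ / a₁)) a₂|
            ≤ |x₁ - y₁| + |x₂ - y₂|) ∧
    (∀ f g : X → ℝ, f ∈ F → g ∈ F →
      ∀ Mf Mg : ℝ, (∀ z, |f z| ≤ Mf) → (∀ z, |g z| ≤ Mg) →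
        f * g ∈ F ∧
        E (f * g) ^ (1 / p) ≤ Mg * E f ^ (1 / p) + Mf * E g ^ (1 / p)) := by
  have hp0 : p ≠ 0 := by positivity
  refine ⟨fun a₁ a₂ ha₁ ha₂ => ⟨truncProd_zero_zero ha₁.le a₂, abs_truncProd_sub_le ha₁ ha₂⟩,
    fun f g hf hg Mf Mg hMf hMg => ?_⟩
  rcases isEmpty_or_nonempty X with hX | ⟨⟨z⟩⟩
  · obtain rfl : f = 0 := Subsingleton.elim _ _
    obtain rfl : g = 0 := Subsingleton.elim _ _
    simp [energy_zero hhom hp0, Real.zero_rpow (inv_ne_zero hp0), F.zero_mem]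
  have hMf0 : 0 ≤ Mf := (abs_nonneg _).trans (hMf z)
  have hMg0 : 0 ≤ Mg := (abs_nonneg _).trans (hMg z)
  rcases hMf0.eq_or_lt with rfl | hMf_pos
  · have hf0 : f = 0 := funext fun z => abs_nonpos_iff.mp (hMf z)
    exact leibniz_of_mul_eq_zero hE0 hhom hp0 hf hg (by rw [hf0, zero_mul]) le_rfl hMg0
  rcases hMg0.eq_or_lt with rfl | hMg_pos
  · have hg0 : g = 0 := funext fun z => abs_nonpos_iff.mp (hMg z)
    exact leibniz_of_mul_eq_zero hE0 hhom hp0 hf hg (by rw [hg0, mul_zero]) hMf0 le_rfl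
  exact GeneralizedContraction.mul_mem_and_leibniz hE0 hhom hGC hp.le hf hg hMf_pos hMg_pos
    hMf hMg

/-- The truncated-product map `T(x₁,x₂) = (((−a₁) ∨ (x₁/a₂)) ∧ a₁)·(((−a₂) ∨ (x₂/a₁)) ∧ a₂)`
vanishes at the origin and is Lipschitz: `|T(x) − T(y)| ≤ |x₁ − y₁| + |x₂ − y₂|`.
Consequently, for a `p`-energy form `(E,F)` satisfying the generalized `p`-contraction
property and bounded `f, g ∈ F` (with `|f| ≤ M_f`, `|g| ≤ M_g`), one has `f·g ∈ F` and
`E(fg)^{1/p} ≤ M_g E(f)^{1/p} + M_f E(g)^{1/p}` (Leibniz-type inequality). -/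
theorem stmt_18 {X : Type*} (p : ℝ) (hp : 1 < p)
    (F : Submodule ℝ (X → ℝ)) (E : (X → ℝ) → ℝ)
    (hE0 : ∀ u ∈ F, 0 ≤ E u)
    (hhom : ∀ (a : ℝ), ∀ u ∈ F, E (a • u) = |a| ^ p * E u)
    (htri : ∀ u ∈ F, ∀ v ∈ F, E (u + v) ^ (1 / p) ≤ E u ^ (1 / p) + E v ^ (1 / p))
    (hGC : ∀ (n₁ n₂ : ℕ) (q₁ q₂ : ℝ), 0 < q₁ → q₁ ≤ p → p ≤ q₂ →
      ∀ T : (Fin n₁ → ℝ) → (Fin n₂ → ℝ), T 0 = 0 →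
        (∀ x y : Fin n₁ → ℝ,
          (∑ l : Fin n₂, |T x l - T y l| ^ q₂) ^ (1 / q₂)
            ≤ (∑ k : Fin n₁, |x k - y k| ^ q₁) ^ (1 / q₁)) →
        ∀ u : Fin n₁ → X → ℝ, (∀ k, u k ∈ F) →
          (∀ l, (fun z => T (fun k => u k z) l) ∈ F) ∧
          (∑ l : Fin n₂, E (fun z => T (fun k => u k z) l) ^ (q₂ / p)) ^ (1 / q₂)
            ≤ (∑ k : Fin n₁, E (u k) ^ (q₁ / p)) ^ (1 / q₁))
    (hGCtop : ∀ (n₁ n₂ : ℕ) (q₁ : ℝ), 0 < q₁ → q₁ ≤ p →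
      ∀ T : (Fin n₁ → ℝ) → (Fin n₂ → ℝ), T 0 = 0 →
        (∀ (x y : Fin n₁ → ℝ) (l : Fin n₂),
          |T x l - T y l| ≤ (∑ k : Fin n₁, |x k - y k| ^ q₁) ^ (1 / q₁)) →
        ∀ u : Fin n₁ → X → ℝ, (∀ k, u k ∈ F) →
          (∀ l, (fun z => T (fun k => u k z) l) ∈ F) ∧
          ∀ l : Fin n₂, E (fun z => T (fun k => u k z) l) ^ (1 / p)
            ≤ (∑ k : Fin n₁, E (u k) ^ (q₁ / p)) ^ (1 / q₁)) :
    (∀ a₁ a₂ : ℝ, 0 < a₁ → 0 < a₂ →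
        (min (max (-a₁) (0 / a₂)) a₁ * min (max (-a₂) (0 / a₁)) a₂ = 0) ∧
        ∀ x₁ x₂ y₁ y₂ : ℝ,
          |min (max (-a₁) (x₁ / a₂)) a₁ * min (max (-a₂) (x₂ / a₁)) a₂
              - min (max (-a₁) (y₁ / a₂)) a₁ * min (max (-a₂) (y₂ / a₁)) a₂|
            ≤ |x₁ - y₁| + |x₂ - y₂|) ∧
    (∀ f g : X → ℝ, f ∈ F → g ∈ F →
      ∀ Mf Mg : ℝ, (∀ z, |f z| ≤ Mf) → (∀ z, |g z| ≤ Mg) →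
        f * g ∈ F ∧
        E (f * g) ^ (1 / p) ≤ Mg * E f ^ (1 / p) + Mf * E g ^ (1 / p)) :=
  stmt_18_general p hp F E hE0 hhom hGC
end

section
/- Let p ∈ (1,∞), and let E₁, E₂ : V → [0,∞) be p-homogeneous functionals on a real vector space V both satisfying the generalized p-contraction property. Then E₁ + E₂ and aE₁ (a ≥ 0) also satisfy the generalized p-contraction property. In the key step, for q₁ ∈ (0,p], q₂ ∈ [p,∞) and nonnegative reals (α_l)_{l=1}^{n₂}, (β_l)_{l=1}^{n₂}, (γ_k)_{k=1}^{n₁}, (δ_k)_{k=1}^{n₁} with (Σ_l α_l^{q₂/p})^{p/q₂} ≤ (Σ_k γ_k^{q₁/p})^{p/q₁} and (Σ_l β_l^{q₂/p})^{p/q₂} ≤ (Σ_k δ_k^{q₁/p})^{p/q₁}, one has Σ_l (α_l + β_l)^{q₂/p} ≤ (Σ_k (γ_k + δ_k)^{q₁/p})^{q₂/q₁}. -/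
/-- The generalized `p`-contraction property (finite exponents `q₂ ∈ [p,∞)`). -/
def GCProp {X : Type*} (p : ℝ) (E : (X → ℝ) → ℝ) : Prop :=
  ∀ (n₁ n₂ : ℕ) (q₁ q₂ : ℝ), 0 < q₁ → q₁ ≤ p → p ≤ q₂ →
    ∀ T : (Fin n₁ → ℝ) → (Fin n₂ → ℝ), T 0 = 0 →
      (∀ x y : Fin n₁ → ℝ,
        (∑ l : Fin n₂, |T x l - T y l| ^ q₂) ^ (1 / q₂)
          ≤ (∑ k : Fin n₁, |x k - y k| ^ q₁) ^ (1 / q₁)) →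
      ∀ u : Fin n₁ → X → ℝ,
        (∑ l : Fin n₂, E (fun z => T (fun k => u k z) l) ^ (q₂ / p)) ^ (1 / q₂)
          ≤ (∑ k : Fin n₁, E (u k) ^ (q₁ / p)) ^ (1 / q₁)

/-- The generalized `p`-contraction property (case `q₂ = ∞`, via sup-norms). -/
def GCPropTop {X : Type*} (p : ℝ) (E : (X → ℝ) → ℝ) : Prop :=
  ∀ (n₁ n₂ : ℕ) (q₁ : ℝ), 0 < q₁ → q₁ ≤ p →
    ∀ T : (Fin n₁ → ℝ) → (Fin n₂ → ℝ), T 0 = 0 →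
      (∀ (x y : Fin n₁ → ℝ) (l : Fin n₂),
        |T x l - T y l| ≤ (∑ k : Fin n₁, |x k - y k| ^ q₁) ^ (1 / q₁)) →
      ∀ (u : Fin n₁ → X → ℝ) (l : Fin n₂),
        E (fun z => T (fun k => u k z) l) ^ (1 / p)
          ≤ (∑ k : Fin n₁, E (u k) ^ (q₁ / p)) ^ (1 / q₁)

open Finset in
private lemma rev_mink {n : ℕ} {s : ℝ} (hs0 : 0 < s) (hs1 : s ≤ 1)
    (γ δ : Fin n → ℝ) (hγ : ∀ k, 0 ≤ γ k) (hδ : ∀ k, 0 ≤ δ k) :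
    (∑ k, γ k ^ s) ^ (1 / s) + (∑ k, δ k ^ s) ^ (1 / s)
      ≤ (∑ k, (γ k + δ k) ^ s) ^ (1 / s) := by
  have hsum_γ : (0:ℝ) ≤ ∑ k, γ k ^ s := Finset.sum_nonneg fun k _ => Real.rpow_nonneg (hγ k) s
  have hsum_δ : (0:ℝ) ≤ ∑ k, δ k ^ s := Finset.sum_nonneg fun k _ => Real.rpow_nonneg (hδ k) s
  set C : ℝ := (∑ k, γ k ^ s) ^ (1 / s) with hCdef
  set D : ℝ := (∑ k, δ k ^ s) ^ (1 / s) with hDdef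
  have hC0 : 0 ≤ C := Real.rpow_nonneg hsum_γ _
  have hD0 : 0 ≤ D := Real.rpow_nonneg hsum_δ _
  have hCs : C ^ s = ∑ k, γ k ^ s := by
    rw [hCdef, ← Real.rpow_mul hsum_γ, one_div_mul_cancel hs0.ne', Real.rpow_one]
  have hDs : D ^ s = ∑ k, δ k ^ s := by
    rw [hDdef, ← Real.rpow_mul hsum_δ, one_div_mul_cancel hs0.ne', Real.rpow_one]
  rcases eq_or_lt_of_le hC0 with hC | hC
  · -- C = 0 : all γ k = 0
    have hγ0 : ∀ k, γ k = 0 := by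
      intro k
      have h0 : ∑ k, γ k ^ s = 0 := by rw [← hCs, ← hC]; simp [Real.zero_rpow hs0.ne']
      have := (Finset.sum_eq_zero_iff_of_nonneg
        (fun k _ => Real.rpow_nonneg (hγ k) s)).mp h0 k (Finset.mem_univ k)
      have := Real.rpow_eq_zero_iff_of_nonneg (hγ k) |>.mp this
      exact this.1
    rw [← hC]
    simp only [zero_add]
    rw [hDdef]
    refine le_of_eq ?_
    congr 1
    exact Finset.sum_congr rfl fun k _ => by rw [hγ0 k, zero_add]
  rcases eq_or_lt_of_le hD0 with hD | hD
  · have hδ0 : ∀ k, δ k = 0 := by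
      intro k
      have h0 : ∑ k, δ k ^ s = 0 := by rw [← hDs, ← hD]; simp [Real.zero_rpow hs0.ne']
      have := (Finset.sum_eq_zero_iff_of_nonneg
        (fun k _ => Real.rpow_nonneg (hδ k) s)).mp h0 k (Finset.mem_univ k)
      have := Real.rpow_eq_zero_iff_of_nonneg (hδ k) |>.mp this
      exact this.1
    rw [← hD]
    simp only [add_zero]
    rw [hCdef]
    refine le_of_eq ?_
    congr 1
    exact Finset.sum_congr rfl fun k _ => by rw [hδ0 k, add_zero]
  -- main case C, D > 0
  have hCD : 0 < C + D := by linarith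
  have hsum_nonneg : (0:ℝ) ≤ ∑ k, (γ k + δ k) ^ s :=
    Finset.sum_nonneg fun k _ => Real.rpow_nonneg (add_nonneg (hγ k) (hδ k)) s
  have key : (C + D) ^ s ≤ ∑ k, (γ k + δ k) ^ s := by
    have h1 : ∀ k, C ^ (1 - s) * γ k ^ s + D ^ (1 - s) * δ k ^ s
        ≤ (C + D) ^ (1 - s) * (γ k + δ k) ^ s := by
      intro k
      have hcc := (Real.concaveOn_rpow hs0.le hs1).2
        (Set.mem_Ici.mpr (div_nonneg (hγ k) hC0 : (0:ℝ) ≤ γ k / C))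
        (Set.mem_Ici.mpr (div_nonneg (hδ k) hD0 : (0:ℝ) ≤ δ k / D))
        (div_nonneg hC0 hCD.le : (0:ℝ) ≤ C / (C + D))
        (div_nonneg hD0 hCD.le : (0:ℝ) ≤ D / (C + D))
        (by field_simp : C / (C + D) + D / (C + D) = 1)
      simp only [smul_eq_mul] at hcc
      have hx : C / (C + D) * (γ k / C) + D / (C + D) * (δ k / D)
          = (γ k + δ k) / (C + D) := by field_simp
      rw [hx, Real.div_rpow (hγ k) hC0, Real.div_rpow (hδ k) hD0,
        Real.div_rpow (add_nonneg (hγ k) (hδ k)) hCD.le] at hcc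
      have h2 := mul_le_mul_of_nonneg_left hcc hCD.le
      have hCs' : (0:ℝ) < C ^ s := Real.rpow_pos_of_pos hC s
      have hDs' : (0:ℝ) < D ^ s := Real.rpow_pos_of_pos hD s
      have hCDs' : (0:ℝ) < (C + D) ^ s := Real.rpow_pos_of_pos hCD s
      rw [Real.rpow_sub hC, Real.rpow_sub hD, Real.rpow_sub hCD]; simp only [Real.rpow_one]
      calc C / C ^ s * γ k ^ s + D / D ^ s * δ k ^ s
          = (C + D) * (C / (C + D) * (γ k ^ s / C ^ s) + D / (C + D) * (δ k ^ s / D ^ s)) := by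
            field_simp
        _ ≤ (C + D) * ((γ k + δ k) ^ s / (C + D) ^ s) := h2
        _ = (C + D) / (C + D) ^ s * (γ k + δ k) ^ s := by ring
    have h3 := Finset.sum_le_sum (fun k (_ : k ∈ Finset.univ) => h1 k)
    rw [← Finset.mul_sum, Finset.sum_add_distrib, ← Finset.mul_sum, ← Finset.mul_sum,
      ← hCs, ← hDs] at h3
    have h4 : C ^ (1 - s) * C ^ s + D ^ (1 - s) * D ^ s = C + D := by
      rw [← Real.rpow_add hC, ← Real.rpow_add hD]; simp
    rw [h4] at h3
    have hCD1s : (0:ℝ) < (C + D) ^ (1 - s) := Real.rpow_pos_of_pos hCD _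
    rw [← mul_le_mul_iff_right₀ hCD1s, ← Real.rpow_add hCD]
    simpa using h3
  calc C + D = ((C + D) ^ s) ^ (1 / s) := by
        rw [← Real.rpow_mul hCD.le, mul_one_div_cancel hs0.ne', Real.rpow_one]
    _ ≤ (∑ k, (γ k + δ k) ^ s) ^ (1 / s) :=
        Real.rpow_le_rpow (Real.rpow_nonneg hCD.le s) key (by positivity)

open Finset in
private lemma key_ineq (p : ℝ) (hp : 0 < p) (n₁ n₂ : ℕ) (q₁ q₂ : ℝ)
    (hq₁ : 0 < q₁) (hq₁p : q₁ ≤ p) (hpq₂ : p ≤ q₂)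
    (α β : Fin n₂ → ℝ) (γ δ : Fin n₁ → ℝ)
    (hα : ∀ l, 0 ≤ α l) (hβ : ∀ l, 0 ≤ β l) (hγ : ∀ k, 0 ≤ γ k) (hδ : ∀ k, 0 ≤ δ k)
    (H1 : (∑ l : Fin n₂, α l ^ (q₂ / p)) ^ (p / q₂)
          ≤ (∑ k : Fin n₁, γ k ^ (q₁ / p)) ^ (p / q₁))
    (H2 : (∑ l : Fin n₂, β l ^ (q₂ / p)) ^ (p / q₂)
          ≤ (∑ k : Fin n₁, δ k ^ (q₁ / p)) ^ (p / q₁)) :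
    ∑ l : Fin n₂, (α l + β l) ^ (q₂ / p)
      ≤ (∑ k : Fin n₁, (γ k + δ k) ^ (q₁ / p)) ^ (q₂ / q₁) := by
  have hq₂ : 0 < q₂ := lt_of_lt_of_le hp hpq₂
  set r : ℝ := q₂ / p with hrdef
  set s : ℝ := q₁ / p with hsdef
  have hr1 : 1 ≤ r := (one_le_div hp).mpr hpq₂
  have hr0 : 0 < r := lt_of_lt_of_le one_pos hr1
  have hs0 : 0 < s := div_pos hq₁ hp
  have hs1 : s ≤ 1 := (div_le_one hp).mpr hq₁p
  have hinv_r : p / q₂ = 1 / r := by rw [hrdef, one_div_div]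
  have hinv_s : p / q₁ = 1 / s := by rw [hsdef, one_div_div]
  rw [hinv_r, hinv_s] at H1 H2
  have hsum : (0:ℝ) ≤ ∑ l : Fin n₂, (α l + β l) ^ r :=
    Finset.sum_nonneg fun l _ => Real.rpow_nonneg (add_nonneg (hα l) (hβ l)) r
  have mink : (∑ l : Fin n₂, (α l + β l) ^ r) ^ (1 / r)
      ≤ (∑ l : Fin n₂, α l ^ r) ^ (1 / r) + (∑ l : Fin n₂, β l ^ r) ^ (1 / r) :=
    Real.Lp_add_le_of_nonneg Finset.univ hr1 (fun l _ => hα l) (fun l _ => hβ l)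
  have rev := rev_mink hs0 hs1 γ δ hγ hδ
  have chain : (∑ l : Fin n₂, (α l + β l) ^ r) ^ (1 / r)
      ≤ (∑ k : Fin n₁, (γ k + δ k) ^ s) ^ (1 / s) :=
    le_trans mink (le_trans (add_le_add H1 H2) rev)
  have hfin : ((∑ l : Fin n₂, (α l + β l) ^ r) ^ (1 / r)) ^ r
      ≤ ((∑ k : Fin n₁, (γ k + δ k) ^ s) ^ (1 / s)) ^ r :=
    Real.rpow_le_rpow (Real.rpow_nonneg hsum _) chain hr0.le
  have hsum2 : (0:ℝ) ≤ ∑ k : Fin n₁, (γ k + δ k) ^ s :=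
    Finset.sum_nonneg fun k _ => Real.rpow_nonneg (add_nonneg (hγ k) (hδ k)) s
  rw [← Real.rpow_mul hsum, one_div_mul_cancel hr0.ne', Real.rpow_one,
    ← Real.rpow_mul hsum2] at hfin
  have hexp : 1 / s * r = q₂ / q₁ := by
    rw [hsdef, hrdef, one_div_div]
    field_simp
  rwa [hexp] at hfin

private lemma raise_pow (p q₂ q₁ : ℝ) (hp : 0 < p) {X Y : ℝ} (hX : 0 ≤ X) (hY : 0 ≤ Y)
    (h : X ^ (1 / q₂) ≤ Y ^ (1 / q₁)) : X ^ (p / q₂) ≤ Y ^ (p / q₁) := by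
  have h2 := Real.rpow_le_rpow (Real.rpow_nonneg hX _) h hp.le
  rwa [← Real.rpow_mul hX, ← Real.rpow_mul hY, one_div_mul_eq_div, one_div_mul_eq_div] at h2

private lemma lower_pow (q₁ q₂ : ℝ) (hq₁ : 0 < q₁) (hq₂ : 0 < q₂) {X Y : ℝ}
    (hX : 0 ≤ X) (hY : 0 ≤ Y) (h : X ≤ Y ^ (q₂ / q₁)) : X ^ (1 / q₂) ≤ Y ^ (1 / q₁) := by
  have h2 := Real.rpow_le_rpow hX h (by positivity : (0:ℝ) ≤ 1 / q₂)
  rwa [← Real.rpow_mul hY, (show q₂ / q₁ * (1 / q₂) = 1 / q₁ by field_simp)] at h2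

private lemma pull_const (a : ℝ) (ha : 0 ≤ a) (q p' : ℝ) (hq : 0 < q) (hp : 0 < p')
    {n : ℕ} (f : Fin n → ℝ) (hf : ∀ k, 0 ≤ f k) :
    (∑ k, (a * f k) ^ (q / p')) ^ (1 / q) = a ^ (1 / p') * (∑ k, f k ^ (q / p')) ^ (1 / q) := by
  have hsum : (0:ℝ) ≤ ∑ k, f k ^ (q / p') :=
    Finset.sum_nonneg fun k _ => Real.rpow_nonneg (hf k) _
  have h1 : ∀ k ∈ Finset.univ, (a * f k) ^ (q / p') = a ^ (q / p') * f k ^ (q / p') :=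
    fun k _ => Real.mul_rpow ha (hf k)
  rw [Finset.sum_congr rfl h1, ← Finset.mul_sum,
    Real.mul_rpow (Real.rpow_nonneg ha _) hsum, ← Real.rpow_mul ha,
    (show q / p' * (1 / q) = 1 / p' by field_simp)]

/-- Stability of the generalized `p`-contraction property: if `E₁, E₂` are nonnegative
`p`-homogeneous functionals satisfying it, then so do `E₁ + E₂` and `aE₁` (`a ≥ 0`).
The key numerical step combines Minkowski's inequality for the `ℓ^{q₂/p}`-norm with the
reverse Minkowski inequality for the `ℓ^{q₁/p}`-quasinorm. -/
theorem stmt_19 {X : Type*} (p : ℝ) (hp : 1 < p)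
    (E₁ E₂ : (X → ℝ) → ℝ) (a : ℝ) (ha : 0 ≤ a)
    (hE₁0 : ∀ u, 0 ≤ E₁ u) (hE₂0 : ∀ u, 0 ≤ E₂ u)
    (hhom₁ : ∀ (c : ℝ) (u : X → ℝ), E₁ (c • u) = |c| ^ p * E₁ u)
    (hhom₂ : ∀ (c : ℝ) (u : X → ℝ), E₂ (c • u) = |c| ^ p * E₂ u)
    (h₁ : GCProp p E₁) (h₁' : GCPropTop p E₁)
    (h₂ : GCProp p E₂) (h₂' : GCPropTop p E₂) :
    (GCProp p fun u => E₁ u + E₂ u) ∧ (GCPropTop p fun u => E₁ u + E₂ u) ∧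
    (GCProp p fun u => a * E₁ u) ∧ (GCPropTop p fun u => a * E₁ u) ∧
    (∀ (n₁ n₂ : ℕ) (q₁ q₂ : ℝ), 0 < q₁ → q₁ ≤ p → p ≤ q₂ →
      ∀ (α β : Fin n₂ → ℝ) (γ δ : Fin n₁ → ℝ),
        (∀ l, 0 ≤ α l) → (∀ l, 0 ≤ β l) → (∀ k, 0 ≤ γ k) → (∀ k, 0 ≤ δ k) →
        (∑ l : Fin n₂, α l ^ (q₂ / p)) ^ (p / q₂)
          ≤ (∑ k : Fin n₁, γ k ^ (q₁ / p)) ^ (p / q₁) →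
        (∑ l : Fin n₂, β l ^ (q₂ / p)) ^ (p / q₂)
          ≤ (∑ k : Fin n₁, δ k ^ (q₁ / p)) ^ (p / q₁) →
        ∑ l : Fin n₂, (α l + β l) ^ (q₂ / p)
          ≤ (∑ k : Fin n₁, (γ k + δ k) ^ (q₁ / p)) ^ (q₂ / q₁)) := by
  have hp0 : (0:ℝ) < p := by linarith
  refine ⟨?_, ?_, ?_, ?_, fun n₁ n₂ q₁ q₂ hq₁ hq₁p hpq₂ α β γ δ hα hβ hγ hδ H1 H2 =>
    key_ineq p hp0 n₁ n₂ q₁ q₂ hq₁ hq₁p hpq₂ α β γ δ hα hβ hγ hδ H1 H2⟩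
  · -- GCProp for E₁ + E₂
    intro n₁ n₂ q₁ q₂ hq₁ hq₁p hpq₂ T hT0 hTlip u
    have hq₂ : (0:ℝ) < q₂ := lt_of_lt_of_le hp0 hpq₂
    have HA := h₁ n₁ n₂ q₁ q₂ hq₁ hq₁p hpq₂ T hT0 hTlip u
    have HB := h₂ n₁ n₂ q₁ q₂ hq₁ hq₁p hpq₂ T hT0 hTlip u
    have hA0 : (0:ℝ) ≤ ∑ l : Fin n₂, E₁ (fun z => T (fun k => u k z) l) ^ (q₂ / p) :=
      Finset.sum_nonneg fun l _ => Real.rpow_nonneg (hE₁0 _) _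
    have hB0 : (0:ℝ) ≤ ∑ l : Fin n₂, E₂ (fun z => T (fun k => u k z) l) ^ (q₂ / p) :=
      Finset.sum_nonneg fun l _ => Real.rpow_nonneg (hE₂0 _) _
    have hG0 : (0:ℝ) ≤ ∑ k : Fin n₁, E₁ (u k) ^ (q₁ / p) :=
      Finset.sum_nonneg fun k _ => Real.rpow_nonneg (hE₁0 _) _
    have hD0 : (0:ℝ) ≤ ∑ k : Fin n₁, E₂ (u k) ^ (q₁ / p) :=
      Finset.sum_nonneg fun k _ => Real.rpow_nonneg (hE₂0 _) _
    have key := key_ineq p hp0 n₁ n₂ q₁ q₂ hq₁ hq₁p hpq₂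
      (fun l => E₁ (fun z => T (fun k => u k z) l)) (fun l => E₂ (fun z => T (fun k => u k z) l))
      (fun k => E₁ (u k)) (fun k => E₂ (u k))
      (fun l => hE₁0 _) (fun l => hE₂0 _) (fun k => hE₁0 _) (fun k => hE₂0 _)
      (raise_pow p q₂ q₁ hp0 hA0 hG0 HA) (raise_pow p q₂ q₁ hp0 hB0 hD0 HB)
    exact lower_pow q₁ q₂ hq₁ hq₂
      (Finset.sum_nonneg fun l _ => Real.rpow_nonneg (add_nonneg (hE₁0 _) (hE₂0 _)) _)
      (Finset.sum_nonneg fun k _ => Real.rpow_nonneg (add_nonneg (hE₁0 _) (hE₂0 _)) _) key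
  · -- GCPropTop for E₁ + E₂
    intro n₁ n₂ q₁ hq₁ hq₁p T hT0 hTlip u l
    have HA := h₁' n₁ n₂ q₁ hq₁ hq₁p T hT0 hTlip u l
    have HB := h₂' n₁ n₂ q₁ hq₁ hq₁p T hT0 hTlip u l
    have hG0 : (0:ℝ) ≤ ∑ k : Fin n₁, E₁ (u k) ^ (q₁ / p) :=
      Finset.sum_nonneg fun k _ => Real.rpow_nonneg (hE₁0 _) _
    have hD0 : (0:ℝ) ≤ ∑ k : Fin n₁, E₂ (u k) ^ (q₁ / p) :=
      Finset.sum_nonneg fun k _ => Real.rpow_nonneg (hE₂0 _) _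
    have HA' := raise_pow p p q₁ hp0 (hE₁0 _) hG0 HA
    have HB' := raise_pow p p q₁ hp0 (hE₂0 _) hD0 HB
    rw [div_self hp0.ne', Real.rpow_one] at HA' HB'
    have hs0 : (0:ℝ) < q₁ / p := div_pos hq₁ hp0
    have hs1 : q₁ / p ≤ 1 := (div_le_one hp0).mpr hq₁p
    have rev := rev_mink hs0 hs1 (fun k => E₁ (u k)) (fun k => E₂ (u k))
      (fun k => hE₁0 _) (fun k => hE₂0 _)
    rw [(show 1 / (q₁ / p) = p / q₁ by rw [one_div_div])] at rev
    have key : E₁ (fun z => T (fun k => u k z) l) + E₂ (fun z => T (fun k => u k z) l)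
        ≤ (∑ k : Fin n₁, (E₁ (u k) + E₂ (u k)) ^ (q₁ / p)) ^ (p / q₁) :=
      le_trans (add_le_add HA' HB') rev
    exact lower_pow q₁ p hq₁ hp0 (add_nonneg (hE₁0 _) (hE₂0 _))
      (Finset.sum_nonneg fun k _ => Real.rpow_nonneg (add_nonneg (hE₁0 _) (hE₂0 _)) _) key
  · -- GCProp for a * E₁
    intro n₁ n₂ q₁ q₂ hq₁ hq₁p hpq₂ T hT0 hTlip u
    have hq₂ : (0:ℝ) < q₂ := lt_of_lt_of_le hp0 hpq₂
    have base := h₁ n₁ n₂ q₁ q₂ hq₁ hq₁p hpq₂ T hT0 hTlip u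
    show (∑ l : Fin n₂, (a * E₁ (fun z => T (fun k => u k z) l)) ^ (q₂ / p)) ^ (1 / q₂)
        ≤ (∑ k : Fin n₁, (a * E₁ (u k)) ^ (q₁ / p)) ^ (1 / q₁)
    rw [pull_const a ha q₂ p hq₂ hp0 _ (fun l => hE₁0 _),
      pull_const a ha q₁ p hq₁ hp0 _ (fun k => hE₁0 _)]
    exact mul_le_mul_of_nonneg_left base (Real.rpow_nonneg ha _)
  · -- GCPropTop for a * E₁
    intro n₁ n₂ q₁ hq₁ hq₁p T hT0 hTlip u l
    have base := h₁' n₁ n₂ q₁ hq₁ hq₁p T hT0 hTlip u l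
    show (a * E₁ (fun z => T (fun k => u k z) l)) ^ (1 / p)
        ≤ (∑ k : Fin n₁, (a * E₁ (u k)) ^ (q₁ / p)) ^ (1 / q₁)
    rw [Real.mul_rpow ha (hE₁0 _), pull_const a ha q₁ p hq₁ hp0 _ (fun k => hE₁0 _)]
    exact mul_le_mul_of_nonneg_left base (Real.rpow_nonneg ha _)
end
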